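/- For all integers $j \geq 2$, $\mathbf{g}_2(j) + \mathbf{g}_3(j,2) > 0$ and $\mathbf{g}_2(j) - \mathbf{g}_3(j,2) > 0$, hence $\mathbf{g}_2^2(j) - \mathbf{g}_3^2(j,2) > 0$, where $\mathbf{g}_2(j) = \sum_{k=1}^{j}\mathbf{f}\left(\frac{2k-1}{j}\pi\right)$ and $\mathbf{g}_3(j,2) = \sum_{k=1}^{j}\mathbf{f}\left(\frac{2k-1}{j}\pi\right)\cos\frac{2k-1}{j}\pi$, with $\mathbf{f}(\varphi) = \frac{3+\cos\varphi}{16|\sin(\varphi/2)|^3} + \cos\varphi$. -/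

import Mathlib

open Real Finset

noncomputable def fbold (φ : ℝ) : ℝ :=
  (3 + Real.cos φ) / (16 * |Real.sin (φ / 2)| ^ 3) + Real.cos φ

noncomputable def g2 (j : ℕ) : ℝ :=
  ∑ k ∈ Finset.Icc 1 j, fbold ((2 * k - 1 : ℝ) / j * π)

noncomputable def g3two (j : ℕ) : ℝ :=
  ∑ k ∈ Finset.Icc 1 j, fbold ((2 * k - 1 : ℝ) / j * π) * Real.cos ((2 * k - 1 : ℝ) / j * π)

/-! Write `s = sin (φ / 2)`, so that `cos φ = 1 - 2 s²`. Then `f(φ) (1 ∓ cos φ)` is a rational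
function of `s` plus `cos φ ∓ cos² φ`. Over the angles `(2k - 1)π / j` the cosines sum to `0`
and their squares to `j / 2` (to `0` if `j = 2`), both by telescoping `2 sin θ cos((2k - 1)θ)`.
This makes `g₂ + g₃` a sum of nonnegative terms, one of them positive. For `g₂ - g₃` each
`1 / (2s) - s / 4` is at least `1 / 4`, and at the two end angles, where
`s = sin (π / (2j)) ≤ π / (2j)`, it is at least `j / π - 1 / 4`; together this beats `j / 2`. -/

lemma two_mul_sin_mul_sum_cos_odd_mul (θ : ℝ) (n : ℕ) :
    2 * sin θ * ∑ k ∈ Icc 1 n, cos ((2 * k - 1) * θ) = sin (2 * n * θ) := by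
  induction n with
  | zero => simp
  | succ n ih =>
    rw [sum_Icc_succ_top (by omega), mul_add, ih]
    have hprev : 2 * (n : ℝ) * θ = (2 * n + 1) * θ - θ := by ring
    have hnext : 2 * ((n + 1 : ℕ) : ℝ) * θ = (2 * n + 1) * θ + θ := by push_cast; ring
    rw [hprev, hnext, sin_sub, sin_add]
    push_cast
    ring_nf

lemma cos_eq_one_sub_two_mul_sin_half_sq (φ : ℝ) : cos φ = 1 - 2 * sin (φ / 2) ^ 2 := by
  rw [← cos_two_mul_eq_one_sub, mul_div_cancel₀ φ two_ne_zero]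

lemma fbold_mul_one_sub_cos {φ : ℝ} (hs : 0 < sin (φ / 2)) :
    fbold φ * (1 - cos φ)
      = (1 / (2 * sin (φ / 2)) - sin (φ / 2) / 4) + (cos φ - cos φ ^ 2) := by
  rw [fbold, abs_of_pos hs, cos_eq_one_sub_two_mul_sin_half_sq φ]
  field_simp
  ring

lemma fbold_mul_one_add_cos {φ : ℝ} (hs : 0 < sin (φ / 2)) :
    fbold φ * (1 + cos φ)
      = (1 / sin (φ / 2) ^ 2 - 1) * (1 / (2 * sin (φ / 2)) - sin (φ / 2) / 4)
        + (cos φ + cos φ ^ 2) := by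
  rw [fbold, abs_of_pos hs, cos_eq_one_sub_two_mul_sin_half_sq φ]
  field_simp
  ring

lemma quarter_le_one_div_two_mul_sub {s : ℝ} (hs : 0 < s) (hs1 : s ≤ 1) :
    1 / 4 ≤ 1 / (2 * s) - s / 4 := by
  have : 1 / 2 ≤ 1 / (2 * s) := one_div_le_one_div_of_le (by positivity) (by linarith)
  linarith

noncomputable def oddAngle (j k : ℕ) : ℝ := (2 * k - 1 : ℝ) / j * π

lemma g2_eq_sum_oddAngle (j : ℕ) : g2 j = ∑ k ∈ Icc 1 j, fbold (oddAngle j k) := rfl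

lemma g3two_eq_sum_oddAngle (j : ℕ) :
    g3two j = ∑ k ∈ Icc 1 j, fbold (oddAngle j k) * cos (oddAngle j k) := rfl

lemma sin_half_oddAngle_pos {j k : ℕ} (hk : k ∈ Icc 1 j) : 0 < sin (oddAngle j k / 2) := by
  obtain ⟨hk1, hkj⟩ := mem_Icc.mp hk
  have hk1' : (1 : ℝ) ≤ k := by exact_mod_cast hk1
  have hkj' : (k : ℝ) ≤ j := by exact_mod_cast hkj
  have hlt : (2 * k - 1 : ℝ) / (2 * j) < 1 := (div_lt_one (by linarith)).mpr (by linarith)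
  rw [show oddAngle j k / 2 = (2 * k - 1 : ℝ) / (2 * j) * π by unfold oddAngle; ring]
  exact sin_pos_of_pos_of_lt_pi (mul_pos (div_pos (by linarith) (by linarith)) pi_pos)
    (mul_lt_of_lt_one_left pi_pos hlt)

lemma sin_half_oddAngle_one (j : ℕ) : sin (oddAngle j 1 / 2) = sin (π / (2 * j)) := by
  unfold oddAngle; push_cast; ring_nf

lemma sin_half_oddAngle_self {j : ℕ} (hj : j ≠ 0) :
    sin (oddAngle j j / 2) = sin (π / (2 * j)) := by
  rw [← sin_pi_sub]
  unfold oddAngle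
  field_simp
  ring_nf

lemma cos_oddAngle_two (k : ℕ) : cos (oddAngle 2 k) = 0 :=
  cos_eq_zero_iff.mpr ⟨k - 1, by unfold oddAngle; push_cast; ring⟩

lemma sum_cos_mul_oddAngle {j m : ℕ} (hm : 0 < m) (hmj : m < j) :
    ∑ k ∈ Icc 1 j, cos (m * oddAngle j k) = 0 := by
  have hj : (0 : ℝ) < j := by exact_mod_cast hm.trans hmj
  have hθ : sin (m * π / j) ≠ 0 := by
    refine (sin_pos_of_pos_of_lt_pi (by positivity) ?_).ne'
    rw [div_lt_iff₀ hj, mul_comm π]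
    exact mul_lt_mul_of_pos_right (by exact_mod_cast hmj) pi_pos
  have htel := two_mul_sin_mul_sum_cos_odd_mul (m * π / j) j
  rw [show 2 * (j : ℝ) * (m * π / j) = (2 * m : ℕ) * π by push_cast; field_simp,
    sin_nat_mul_pi] at htel
  have hsum : ∑ k ∈ Icc 1 j, cos (m * oddAngle j k)
      = ∑ k ∈ Icc 1 j, cos ((2 * k - 1) * (m * π / j)) :=
    sum_congr rfl fun k _ => by unfold oddAngle; ring_nf
  rw [hsum]
  exact (mul_eq_zero.mp htel).resolve_left (mul_ne_zero two_ne_zero hθ)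

lemma sum_cos_oddAngle {j : ℕ} (hj : 2 ≤ j) : ∑ k ∈ Icc 1 j, cos (oddAngle j k) = 0 := by
  simpa using sum_cos_mul_oddAngle (m := 1) one_pos hj

lemma sum_cos_sq_oddAngle {j : ℕ} (hj : 3 ≤ j) :
    ∑ k ∈ Icc 1 j, cos (oddAngle j k) ^ 2 = j / 2 := by
  have h2 := sum_cos_mul_oddAngle (m := 2) two_pos hj
  push_cast at h2
  simp only [cos_sq, sum_add_distrib, ← sum_div, h2, sum_const, Nat.card_Icc, nsmul_eq_mul]
  push_cast
  ring

lemma g2_sub_g3two (j : ℕ) :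
    g2 j - g3two j
      = ∑ k ∈ Icc 1 j, (1 / (2 * sin (oddAngle j k / 2)) - sin (oddAngle j k / 2) / 4)
        + (∑ k ∈ Icc 1 j, cos (oddAngle j k) - ∑ k ∈ Icc 1 j, cos (oddAngle j k) ^ 2) := by
  rw [g2_eq_sum_oddAngle, g3two_eq_sum_oddAngle, ← sum_sub_distrib, ← sum_sub_distrib,
    ← sum_add_distrib]
  refine sum_congr rfl fun k hk => ?_
  rw [← fbold_mul_one_sub_cos (sin_half_oddAngle_pos hk)]
  ring

lemma g2_add_g3two (j : ℕ) :
    g2 j + g3two j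
      = ∑ k ∈ Icc 1 j, (1 / sin (oddAngle j k / 2) ^ 2 - 1)
          * (1 / (2 * sin (oddAngle j k / 2)) - sin (oddAngle j k / 2) / 4)
        + (∑ k ∈ Icc 1 j, cos (oddAngle j k) + ∑ k ∈ Icc 1 j, cos (oddAngle j k) ^ 2) := by
  rw [g2_eq_sum_oddAngle, g3two_eq_sum_oddAngle, ← sum_add_distrib, ← sum_add_distrib,
    ← sum_add_distrib]
  refine sum_congr rfl fun k hk => ?_
  rw [← fbold_mul_one_add_cos (sin_half_oddAngle_pos hk)]
  ring

lemma div_pi_sub_quarter_le {j : ℕ} (hj : 0 < j) :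
    j / π - 1 / 4 ≤ 1 / (2 * sin (π / (2 * j))) - sin (π / (2 * j)) / 4 := by
  have hx : 0 < π / (2 * j) := by positivity
  have hxπ : π / (2 * j) < π :=
    div_lt_self pi_pos (by linarith [(by exact_mod_cast hj : (1 : ℝ) ≤ j)])
  have hs := sin_pos_of_pos_of_lt_pi hx hxπ
  have hinv : 1 / (2 * (π / (2 * j))) ≤ 1 / (2 * sin (π / (2 * j))) :=
    one_div_le_one_div_of_le (by positivity) (by linarith [sin_le hx.le])
  rw [show 1 / (2 * (π / (2 * j))) = j / π by field_simp] at hinv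
  linarith [sin_le_one (π / (2 * j))]

lemma le_sum_one_div_two_mul_sin_sub {j : ℕ} (hj : 2 ≤ j) :
    j / 4 + 2 * (j / π - 1 / 2)
      ≤ ∑ k ∈ Icc 1 j, (1 / (2 * sin (oddAngle j k / 2)) - sin (oddAngle j k / 2) / 4) := by
  set B : ℕ → ℝ := fun k => 1 / (2 * sin (oddAngle j k / 2)) - sin (oddAngle j k / 2) / 4
  have hpair : ∑ k ∈ {1, j}, (B k - 1 / 4) ≤ ∑ k ∈ Icc 1 j, (B k - 1 / 4) := by
    refine sum_le_sum_of_subset_of_nonneg ?_ fun k hk _ => ?_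
    · rw [insert_subset_iff, singleton_subset_iff, mem_Icc, mem_Icc]
      omega
    · exact sub_nonneg.mpr <|
        quarter_le_one_div_two_mul_sub (sin_half_oddAngle_pos hk) (sin_le_one _)
  have hj0 : j ≠ 0 := by omega
  have hend := div_pi_sub_quarter_le (Nat.pos_of_ne_zero hj0)
  rw [sum_pair (by omega), sum_sub_distrib, sum_const, Nat.card_Icc, nsmul_eq_mul] at hpair
  simp only [B, sin_half_oddAngle_one, sin_half_oddAngle_self hj0] at hpair
  push_cast at hpair
  linarith

lemma sum_cos_sq_oddAngle_lt {j : ℕ} (hj : 2 ≤ j) :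
    ∑ k ∈ Icc 1 j, cos (oddAngle j k) ^ 2
      < ∑ k ∈ Icc 1 j, (1 / (2 * sin (oddAngle j k / 2)) - sin (oddAngle j k / 2) / 4) := by
  rcases hj.eq_or_lt with rfl | hj3
  -- for `j = 2` every angle is an odd multiple of `π / 2`, so the squares sum to `0`, not `j / 2`
  · simp only [cos_oddAngle_two, zero_pow two_ne_zero, sum_const_zero]
    exact sum_pos (fun k hk => lt_of_lt_of_le (by norm_num) <|
        quarter_le_one_div_two_mul_sub (sin_half_oddAngle_pos hk) (sin_le_one _))
      ⟨1, by simp⟩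
  · have hj3' : (3 : ℝ) ≤ j := by exact_mod_cast hj3
    have hπ : (j : ℝ) / (63 / 20) ≤ j / π :=
      div_le_div_of_nonneg_left (by positivity) pi_pos (by linarith [pi_lt_d2])
    rw [sum_cos_sq_oddAngle hj3]
    linarith [le_sum_one_div_two_mul_sin_sub hj]

lemma sum_one_div_sin_sq_sub_one_mul_pos {j : ℕ} (hj : 2 ≤ j) :
    0 < ∑ k ∈ Icc 1 j, (1 / sin (oddAngle j k / 2) ^ 2 - 1)
      * (1 / (2 * sin (oddAngle j k / 2)) - sin (oddAngle j k / 2) / 4) := by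
  refine sum_pos' (fun k hk => ?_) ⟨1, mem_Icc.mpr ⟨le_rfl, by omega⟩, ?_⟩
  · have hs := sin_half_oddAngle_pos hk
    have hB := quarter_le_one_div_two_mul_sub hs (sin_le_one _)
    have hA : 1 ≤ 1 / sin (oddAngle j k / 2) ^ 2 :=
      one_le_one_div (by positivity) (pow_le_one₀ hs.le (sin_le_one _))
    exact mul_nonneg (by linarith) (by linarith)
  · have hs := sin_half_oddAngle_pos (j := j) (k := 1) (mem_Icc.mpr ⟨le_rfl, by omega⟩)
    have hB := quarter_le_one_div_two_mul_sub hs (sin_le_one _)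
    rw [sin_half_oddAngle_one] at hs hB ⊢
    have hj2 : (2 : ℝ) ≤ j := by exact_mod_cast hj
    have hlt : sin (π / (2 * j)) < 1 := calc
      sin (π / (2 * j)) ≤ π / (2 * j) := sin_le (by positivity)
      _ ≤ π / 4 := div_le_div_of_nonneg_left pi_pos.le (by norm_num) (by linarith)
      _ < 1 := by linarith [pi_lt_four]
    have hA : 1 < 1 / sin (π / (2 * j)) ^ 2 :=
      one_lt_one_div (by positivity) (pow_lt_one₀ hs.le hlt two_ne_zero)
    exact mul_pos (by linarith) (by linarith)

theorem g2_sq_sub_g3_sq_pos (j : ℕ) (hj : 2 ≤ j) :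
    0 < g2 j + g3two j ∧ 0 < g2 j - g3two j ∧ 0 < g2 j ^ 2 - g3two j ^ 2 := by
  have hadd : 0 < g2 j + g3two j := by
    rw [g2_add_g3two, sum_cos_oddAngle hj]
    have := sum_nonneg fun k (_ : k ∈ Icc 1 j) => sq_nonneg (cos (oddAngle j k))
    linarith [sum_one_div_sin_sq_sub_one_mul_pos hj]
  have hsub : 0 < g2 j - g3two j := by
    rw [g2_sub_g3two, sum_cos_oddAngle hj]
    linarith [sum_cos_sq_oddAngle_lt hj]
  exact ⟨hadd, hsub, by rw [sq_sub_sq]; exact mul_pos hadd hsub⟩
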